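/- Let m be a positive integer, ξ = exp(2πi·a/m) for some a coprime to m, and L a symmetric n×n integer matrix with b₊ positive and b₋ negative eigenvalues and det L ≠ 0. Assume the Gauss sum g = ∑_{i ∈ ℤ/m} ξ^{i²} is nonzero. Then the quantity (∑_{x ∈ (ℤ/m)^n} ξ^{txLx}) · g^{-b₊} · ḡ^{-b₋} is invariant under stabilization L ↦ L ⊕ (±1), i.e., replacing L by the block matrix with an extra diagonal entry ±1 leaves the quantity unchanged. -/

import Mathlib

/-!
The quantity is multiplicative under block sums `L ⊕ D`: the Gauss sum over `(ℤ/m)^(n+k)`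
factors, and the characteristic polynomial of a block-diagonal matrix is the product of those of
its blocks, so `b₊` and `b₋` add up. The `1 × 1` matrix `(±1)` has Gauss sum `g` resp. `ḡ`
(because `ξ̄ = ξ⁻¹`) and `(b₊, b₋) = (1, 0)` resp. `(0, 1)`, so its quantity is `1`.
-/

open Matrix

/-- Number of positive eigenvalues of a real symmetric (Hermitian) matrix. -/
noncomputable def bplus {ι : Type*} [Fintype ι] [DecidableEq ι]
    (A : Matrix ι ι ℝ) : ℕ :=
  if h : A.IsHermitian then Fintype.card {i // 0 < h.eigenvalues i} else 0

/-- Number of negative eigenvalues of a real symmetric (Hermitian) matrix. -/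
noncomputable def bminus {ι : Type*} [Fintype ι] [DecidableEq ι]
    (A : Matrix ι ι ℝ) : ℕ :=
  if h : A.IsHermitian then Fintype.card {i // h.eigenvalues i < 0} else 0

/-- The (unnormalized) Murakami–Ohtsuki–Okada quantity of an integer matrix `L`:
`(∑_{x ∈ (ℤ/m)^n} ξ^{ᵗxLx}) · g^{-b₊} · ḡ^{-b₋}`. -/
noncomputable def mooQuantity {ι : Type*} [Fintype ι] [DecidableEq ι]
    (m : ℕ) (ξ g : ℂ) (L : Matrix ι ι ℤ) : ℂ :=
  (∑ x : ι → Fin m, ξ ^ ((fun i => ((x i : ℕ) : ℤ)) ⬝ᵥ L.mulVec fun i => ((x i : ℕ) : ℤ)))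
    * g ^ (-(bplus (L.map (Int.cast : ℤ → ℝ)) : ℤ))
    * (starRingEnd ℂ g) ^ (-(bminus (L.map (Int.cast : ℤ → ℝ)) : ℤ))

open Polynomial

section Signature

variable {ι κ : Type*} [Fintype ι] [DecidableEq ι] [Fintype κ] [DecidableEq κ]

lemma Matrix.IsHermitian.card_eigenvalues_eq_countP_roots {A : Matrix ι ι ℝ}
    (hA : A.IsHermitian) (p : ℝ → Prop) [DecidablePred p] :
    Fintype.card {i // p (hA.eigenvalues i)} = A.charpoly.roots.countP p := by
  rw [hA.roots_charpoly_eq_eigenvalues, Multiset.countP_map, Fintype.card_subtype,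
    Finset.card_def, Finset.filter_val]
  rfl

lemma card_eigenvalues_fromBlocks_zero {A : Matrix ι ι ℝ} {D : Matrix κ κ ℝ}
    (hA : A.IsHermitian) (hD : D.IsHermitian) (hAD : (fromBlocks A 0 0 D).IsHermitian)
    (p : ℝ → Prop) [DecidablePred p] :
    Fintype.card {i // p (hAD.eigenvalues i)} =
      Fintype.card {i // p (hA.eigenvalues i)} + Fintype.card {i // p (hD.eigenvalues i)} := by
  simp only [Matrix.IsHermitian.card_eigenvalues_eq_countP_roots, charpoly_fromBlocks_zero₁₂,
    roots_mul (mul_ne_zero (charpoly_monic A).ne_zero (charpoly_monic D).ne_zero),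
    Multiset.countP_add]

lemma bplus_fromBlocks_zero {A : Matrix ι ι ℝ} {D : Matrix κ κ ℝ}
    (hA : A.IsHermitian) (hD : D.IsHermitian) :
    bplus (fromBlocks A 0 0 D) = bplus A + bplus D := by
  rw [bplus, bplus, bplus, dif_pos (hA.fromBlocks conjTranspose_zero hD), dif_pos hA, dif_pos hD]
  exact card_eigenvalues_fromBlocks_zero hA hD _ (0 < ·)

lemma bminus_fromBlocks_zero {A : Matrix ι ι ℝ} {D : Matrix κ κ ℝ}
    (hA : A.IsHermitian) (hD : D.IsHermitian) :
    bminus (fromBlocks A 0 0 D) = bminus A + bminus D := by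
  rw [bminus, bminus, bminus, dif_pos (hA.fromBlocks conjTranspose_zero hD), dif_pos hA, dif_pos hD]
  exact card_eigenvalues_fromBlocks_zero hA hD _ (· < 0)

lemma charpoly_of_unit (d : ℝ) : (of fun _ _ : Unit => d).charpoly = X - C d := by
  rw [charpoly, det_unique, charmatrix_apply_eq]
  rfl

lemma isHermitian_of_unit (d : ℝ) : (of fun _ _ : Unit => d).IsHermitian :=
  isHermitian_iff_isSymm.mpr rfl

lemma card_eigenvalues_of_unit (d : ℝ) (p : ℝ → Prop) [DecidablePred p] :
    Fintype.card {i // p ((isHermitian_of_unit d).eigenvalues i)} = if p d then 1 else 0 := by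
  rw [Matrix.IsHermitian.card_eigenvalues_eq_countP_roots, charpoly_of_unit, roots_X_sub_C,
    ← Multiset.cons_zero, Multiset.countP_cons, Multiset.countP_zero, zero_add]

lemma bplus_of_unit (d : ℝ) : bplus (of fun _ _ : Unit => d) = if 0 < d then 1 else 0 := by
  rw [bplus, dif_pos (isHermitian_of_unit d)]
  exact card_eigenvalues_of_unit d (0 < ·)

lemma bminus_of_unit (d : ℝ) : bminus (of fun _ _ : Unit => d) = if d < 0 then 1 else 0 := by
  rw [bminus, dif_pos (isHermitian_of_unit d)]
  exact card_eigenvalues_of_unit d (· < 0)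

end Signature

section GaussSum

variable {ι κ : Type*} [Fintype ι] [DecidableEq ι] [Fintype κ] [DecidableEq κ]

noncomputable def quadraticGaussSum (m : ℕ) (ξ : ℂ) (L : Matrix ι ι ℤ) : ℂ :=
  ∑ x : ι → Fin m, ξ ^ ((fun i => ((x i : ℕ) : ℤ)) ⬝ᵥ L.mulVec fun i => ((x i : ℕ) : ℤ))

lemma mooQuantity_eq (m : ℕ) (ξ g : ℂ) (L : Matrix ι ι ℤ) :
    mooQuantity m ξ g L = quadraticGaussSum m ξ L
      * g ^ (-(bplus (L.map (Int.cast : ℤ → ℝ)) : ℤ))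
      * (starRingEnd ℂ g) ^ (-(bminus (L.map (Int.cast : ℤ → ℝ)) : ℤ)) :=
  rfl

lemma quadraticGaussSum_fromBlocks_zero {m : ℕ} {ξ : ℂ} (hξ : ξ ≠ 0)
    (A : Matrix ι ι ℤ) (D : Matrix κ κ ℤ) :
    quadraticGaussSum m ξ (fromBlocks A 0 0 D) =
      quadraticGaussSum m ξ A * quadraticGaussSum m ξ D := by
  rw [quadraticGaussSum, quadraticGaussSum, quadraticGaussSum, Finset.sum_mul_sum,
    ← (Equiv.sumArrowEquivProdArrow ι κ (Fin m)).symm.sum_comp, Fintype.sum_prod_type]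
  refine Finset.sum_congr rfl fun x _ => Finset.sum_congr rfl fun y _ => ?_
  have hv : (fun i => (((Equiv.sumArrowEquivProdArrow ι κ (Fin m)).symm (x, y) i : ℕ) : ℤ)) =
      Sum.elim (fun i => ((x i : ℕ) : ℤ)) (fun i => ((y i : ℕ) : ℤ)) := by
    funext i; cases i <;> rfl
  rw [hv, fromBlocks_mulVec, zero_mulVec, zero_mulVec, add_zero, zero_add,
    sumElim_dotProduct_sumElim, Sum.elim_comp_inl, Sum.elim_comp_inr, zpow_add₀ hξ]

lemma quadraticGaussSum_of_unit (m : ℕ) (ξ : ℂ) (ε : ℤ) :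
    quadraticGaussSum m ξ (of fun _ _ : Unit => ε) = ∑ i : Fin m, ξ ^ (ε * ((i : ℕ) : ℤ) ^ 2) := by
  rw [quadraticGaussSum, ← (Equiv.funUnique Unit (Fin m)).symm.sum_comp]
  refine Finset.sum_congr rfl fun i _ => ?_
  simp only [dotProduct, mulVec, Fintype.sum_unique, of_apply, Equiv.funUnique_symm_apply,
    uniqueElim_const]
  congr 1
  ring

lemma mooQuantity_fromBlocks_zero (m : ℕ) {ξ : ℂ} (hξ : ξ ≠ 0) (g : ℂ)
    {A : Matrix ι ι ℤ} {D : Matrix κ κ ℤ} (hA : A.IsSymm) (hD : D.IsSymm) :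
    mooQuantity m ξ g (fromBlocks A 0 0 D) = mooQuantity m ξ g A * mooQuantity m ξ g D := by
  have hA' := isHermitian_iff_isSymm.mpr (hA.map (Int.cast : ℤ → ℝ))
  have hD' := isHermitian_iff_isSymm.mpr (hD.map (Int.cast : ℤ → ℝ))
  simp only [mooQuantity_eq, quadraticGaussSum_fromBlocks_zero hξ, fromBlocks_map,
    Matrix.map_zero _ Int.cast_zero, bplus_fromBlocks_zero hA' hD',
    bminus_fromBlocks_zero hA' hD', _root_.zpow_neg, zpow_natCast, pow_add, mul_inv]
  ring

end GaussSum

lemma Complex.conj_exp_two_pi_I_mul_div (a : ℤ) (m : ℕ) :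
    starRingEnd ℂ (exp (2 * Real.pi * I * a / m)) = (exp (2 * Real.pi * I * a / m))⁻¹ := by
  rw [← exp_conj, ← exp_neg]
  congr 1
  simp only [map_div₀, map_mul, map_ofNat, conj_ofReal, conj_I, map_intCast, map_natCast]
  ring

lemma conj_sum_pow_sq {m : ℕ} {ξ : ℂ} (hξ : starRingEnd ℂ ξ = ξ⁻¹) :
    starRingEnd ℂ (∑ i : Fin m, ξ ^ ((i : ℕ) ^ 2)) = ∑ i : Fin m, ξ ^ (-1 * ((i : ℕ) : ℤ) ^ 2) := by
  simp only [map_sum, map_pow, hξ, neg_one_mul, _root_.zpow_neg, inv_pow]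
  norm_cast

lemma mooQuantity_of_unit_eq_one {m : ℕ} {ξ g : ℂ} (hξ : starRingEnd ℂ ξ = ξ⁻¹)
    (hg : g = ∑ i : Fin m, ξ ^ ((i : ℕ) ^ 2)) (hg0 : g ≠ 0) {ε : ℤ} (hε : ε = 1 ∨ ε = -1) :
    mooQuantity m ξ g (of fun _ _ : Unit => ε) = 1 := by
  have hmap : (of fun _ _ : Unit => ε).map (Int.cast : ℤ → ℝ) = of fun _ _ => (ε : ℝ) := rfl
  rw [mooQuantity_eq, quadraticGaussSum_of_unit, hmap, bplus_of_unit, bminus_of_unit]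
  rcases hε with rfl | rfl
  · have hsum : ∑ i : Fin m, ξ ^ (1 * ((i : ℕ) : ℤ) ^ 2) = g := by
      simp only [hg, one_mul]; norm_cast
    rw [hsum]
    norm_num [hg0]
  · rw [← conj_sum_pow_sq hξ, ← hg]
    norm_num [hg0]

theorem stmt10_general (n m : ℕ) (a : ℤ)
    (L : Matrix (Fin n) (Fin n) ℤ) (hL : L.IsSymm)
    (ε : ℤ) (hε : ε = 1 ∨ ε = -1)
    (ξ : ℂ) (hξ : ξ = Complex.exp (2 * Real.pi * Complex.I * a / m))
    (g : ℂ) (hg : g = ∑ i : Fin m, ξ ^ ((i : ℕ) ^ 2)) (hg0 : g ≠ 0) :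
    mooQuantity m ξ g
        (Matrix.fromBlocks L 0 0 (Matrix.of fun (_ _ : Unit) => ε)) =
      mooQuantity m ξ g L := by
  have hξ0 : ξ ≠ 0 := hξ ▸ Complex.exp_ne_zero _
  have hξconj : starRingEnd ℂ ξ = ξ⁻¹ := hξ ▸ Complex.conj_exp_two_pi_I_mul_div a m
  rw [mooQuantity_fromBlocks_zero m hξ0 g hL (IsSymm.ext fun _ _ => rfl),
    mooQuantity_of_unit_eq_one hξconj hg hg0 hε, mul_one]

/-- for `m > 0`, `ξ = exp(2πi·a/m)` with `gcd(a,m) = 1`, and `L` a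
nondegenerate symmetric integer matrix, if the Gauss sum `g = ∑_{i ∈ ℤ/m} ξ^{i²}` is
nonzero, then `(∑_{x ∈ (ℤ/m)^n} ξ^{ᵗxLx})·g^{-b₊}·ḡ^{-b₋}` is invariant under the
stabilization `L ↦ L ⊕ (±1)`. -/
theorem stmt10 (n m : ℕ) (hm : 0 < m) (a : ℤ) (ha : Int.gcd a m = 1)
    (L : Matrix (Fin n) (Fin n) ℤ) (hL : L.IsSymm) (hdet : L.det ≠ 0)
    (ε : ℤ) (hε : ε = 1 ∨ ε = -1)
    (ξ : ℂ) (hξ : ξ = Complex.exp (2 * Real.pi * Complex.I * a / m))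
    (g : ℂ) (hg : g = ∑ i : Fin m, ξ ^ ((i : ℕ) ^ 2)) (hg0 : g ≠ 0) :
    mooQuantity m ξ g
        (Matrix.fromBlocks L 0 0 (Matrix.of fun (_ _ : Unit) => ε)) =
      mooQuantity m ξ g L :=
  stmt10_general n m a L hL ε hε ξ hξ g hg hg0
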